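/- Let T be a type of test cases, let (ι, k, d) be a family of datamorphisms on T, and let S : Set T. For every K : ℕ, every element of the K-fold iterate F^[K](S) is an i'th order mutant of S by d for some i ≤ K; that is, F^[K](S) ⊆ ⋃_{i ≤ K} M i. (Minimality half of the Corollary of Theorem 1.) -/
import Mathlib


/-- The set of first order mutants of `S` generated by the family of
datamorphisms `d` with arities `k`. -/
def FOM {T ι : Type*} (k : ι → ℕ) (d : ∀ i, (Fin (k i) → T) → T) (S : Set T) : Set T :=
  {y : T | ∃ i : ι, ∃ x : Fin (k i) → T, (∀ j, x j ∈ S) ∧ y = d i x}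

/-- The output of Algorithm 1: the seeds together with all first order mutants. -/
def F {T ι : Type*} (k : ι → ℕ) (d : ∀ i, (Fin (k i) → T) → T) (S : Set T) : Set T :=
  S ∪ FOM k d S

/-- The `n`'th order mutants of `S` by `d`: `M 0 = S` and a test case is an
`(n+1)`'th order mutant if it is obtained by applying a datamorphism to mutants
of order at most `n`, at least one of which has order exactly `n`. -/
def M {T ι : Type*} (k : ι → ℕ) (d : ∀ i, (Fin (k i) → T) → T) (S : Set T) : ℕ → Set T
  | 0 => S
  | n + 1 =>
    {y : T | ∃ i : ι, ∃ x : Fin (k i) → T, y = d i x ∧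
      (∀ j, x j ∈ ⋃ m ≤ n, M k d S m) ∧ (∃ j, x j ∈ M k d S n)}

theorem F_mono {T ι : Type*} (k : ι → ℕ) (d : ∀ i, (Fin (k i) → T) → T) {A B : Set T}
    (h : A ⊆ B) : F k d A ⊆ F k d B := by
  rintro y (hy | ⟨i, x, hx, rfl⟩)
  · exact Or.inl (h hy)
  · exact Or.inr ⟨i, x, fun j => h (hx j), rfl⟩

theorem F_step {T ι : Type*} (k : ι → ℕ) (hk : ∀ i, 1 ≤ k i)
    (d : ∀ i, (Fin (k i) → T) → T) (S : Set T) (n : ℕ) :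
    F k d (⋃ m ≤ n, M k d S m) ⊆ ⋃ m ≤ n + 1, M k d S m := by
  rintro y (hy | ⟨i, x, hx, rfl⟩)
  · simp only [Set.mem_iUnion] at hy ⊢
    obtain ⟨m, hm, hym⟩ := hy
    exact ⟨m, hm.trans (Nat.le_succ n), hym⟩
  · choose f hf hxf using fun j => by
      have := hx j
      simp only [Set.mem_iUnion] at this
      exact this
    haveI : NeZero (k i) := ⟨Nat.one_le_iff_ne_zero.mp (hk i)⟩
    obtain ⟨j0, -, hj0⟩ := Finset.exists_max_image Finset.univ f ⟨0, Finset.mem_univ 0⟩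
    set m := f j0 with hm
    have hmn : m ≤ n := hf j0
    simp only [Set.mem_iUnion]
    refine ⟨m + 1, Nat.succ_le_succ hmn, ?_⟩
    simp only [M, Set.mem_setOf_eq]
    refine ⟨i, x, rfl, ?_, j0, hxf j0⟩
    intro j
    simp only [Set.mem_iUnion]
    exact ⟨f j, hj0 j (Finset.mem_univ j), hxf j⟩

/-- Minimality half of the Corollary of Theorem 1: every element of `F^[K] S`
is an `i`'th order mutant of `S` by `d` for some `i ≤ K`. -/
theorem iterate_F_subset_union_M {T ι : Type*} (k : ι → ℕ) (hk : ∀ i, 1 ≤ k i)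
    (d : ∀ i, (Fin (k i) → T) → T) (S : Set T) (K : ℕ) :
    (F k d)^[K] S ⊆ ⋃ i ≤ K, M k d S i := by
  induction K with
  | zero => simp [M]
  | succ K ih =>
    rw [Function.iterate_succ_apply']
    exact (F_mono k d ih).trans (F_step k hk d S K)
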